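/- Define M : ℕ → ℕ by M(0) = 1 and, for k ≥ 1, M(k) = max over odd i ∈ {1,3,…,2k−1} of max(M((i−1)/2)·M(k−(i+1)/2), M((i−1)/2)+M(k−(i+1)/2)). Then for all k ≥ 0, M(k) < (1.45)^{k+1}. -/
import Mathlib


open Finset

private def f : ℕ → ℕ
  | 0 => 1
  | 1 => 2
  | 2 => 3
  | 3 => 4
  | (n+4) => 3 * f (n+1)

private lemma f_one_le : ∀ n, 1 ≤ f n := by
  intro n
  induction n using Nat.strong_induction_on with
  | _ n ih =>
    match n with
    | 0 => decide
    | 1 => decide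
    | 2 => decide
    | 3 => decide
    | (n+4) =>
      have h := ih (n+1) (by omega)
      show 1 ≤ 3 * f (n+1)
      omega

private lemma f_two_le : ∀ n, 1 ≤ n → 2 ≤ f n := by
  intro n hn
  match n with
  | 1 => decide
  | 2 => decide
  | 3 => decide
  | (n+4) =>
    have h := f_one_le (n+1)
    show 2 ≤ 3 * f (n+1)
    omega

private lemma f_succ : ∀ n, f n + 1 ≤ f (n+1) := by
  intro n
  induction n using Nat.strong_induction_on with
  | _ n ih =>
    match n with
    | 0 => decide
    | 1 => decide
    | 2 => decide
    | 3 => decide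
    | (n+4) =>
      have h := ih (n+1) (by omega)
      show 3 * f (n+1) + 1 ≤ 3 * f (n+1+1)
      omega

private lemma f_prod : ∀ s j j', j + j' = s → f j * f j' ≤ f (j + j' + 1) := by
  intro s
  induction s using Nat.strong_induction_on with
  | _ s ih =>
    intro j j' hs
    by_cases hj : 4 ≤ j
    · -- j = (j-4)+4
      obtain ⟨m, rfl⟩ : ∃ m, j = m + 4 := ⟨j - 4, by omega⟩
      have h1 : f (m + 4) = 3 * f (m + 1) := rfl
      have h2 : f (m + 4 + j' + 1) = 3 * f (m + 1 + j' + 1) := by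
        have : m + 4 + j' + 1 = (m + j' + 1) + 4 := by omega
        rw [this]
        have : m + 1 + j' + 1 = (m + j' + 1) + 1 := by omega
        rw [this]
        rfl
      have h3 := ih (m + 1 + j') (by omega) (m+1) j' rfl
      calc f (m + 4) * f j' = 3 * (f (m + 1) * f j') := by rw [h1]; ring
        _ ≤ 3 * f (m + 1 + j' + 1) := by omega
        _ = f (m + 4 + j' + 1) := h2.symm
    · by_cases hj' : 4 ≤ j'
      · obtain ⟨m, rfl⟩ : ∃ m, j' = m + 4 := ⟨j' - 4, by omega⟩
        have h1 : f (m + 4) = 3 * f (m + 1) := rfl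
        have h2 : f (j + (m + 4) + 1) = 3 * f (j + (m + 1) + 1) := by
          have : j + (m + 4) + 1 = (j + m + 1) + 4 := by omega
          rw [this]
          have : j + (m + 1) + 1 = (j + m + 1) + 1 := by omega
          rw [this]
          rfl
        have h3 := ih (j + (m + 1)) (by omega) j (m+1) rfl
        calc f j * f (m + 4) = 3 * (f j * f (m + 1)) := by rw [h1]; ring
          _ ≤ 3 * f (j + (m + 1) + 1) := by omega
          _ = f (j + (m + 4) + 1) := h2.symm
      · interval_cases j <;> interval_cases j' <;> decide

private lemma f_sum : ∀ j j', f j + f j' ≤ f (j + j' + 1) := by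
  intro j j'
  match j, j' with
  | 0, j' =>
    have h := f_succ j'
    have h0 : f 0 = 1 := rfl
    show f 0 + f j' ≤ f (0 + j' + 1)
    rw [h0, Nat.zero_add]
    omega
  | j, 0 =>
    have := f_succ j
    have h0 : f 0 = 1 := rfl
    have : f j + f 0 ≤ f (j + 1) := by omega
    simpa using this
  | (a+1), (b+1) =>
    have h1 := f_two_le (a+1) (by omega)
    have h2 := f_two_le (b+1) (by omega)
    have h3 : f (a+1) + f (b+1) ≤ f (a+1) * f (b+1) := Nat.add_le_mul h1 h2
    exact h3.trans (f_prod _ _ _ rfl)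

private lemma f_real_bound : ∀ n, (f n : ℝ) < (1.45 : ℝ) ^ (n + 1) := by
  intro n
  induction n using Nat.strong_induction_on with
  | _ n ih =>
    match n with
    | 0 => norm_num [f]
    | 1 => norm_num [f]
    | 2 => norm_num [f]
    | 3 => norm_num [f]
    | (m+4) =>
      have h := ih (m+1) (by omega)
      have h3 : (3 : ℝ) < (1.45 : ℝ) ^ 3 := by norm_num
      have hpos : (0 : ℝ) < (1.45 : ℝ) ^ (m + 2) := by positivity
      have hf : (f (m+4) : ℝ) = 3 * (f (m+1) : ℝ) := by
        show ((3 * f (m+1) : ℕ) : ℝ) = _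
        push_cast
        ring
      calc (f (m+4) : ℝ) = 3 * (f (m+1) : ℝ) := hf
        _ < 3 * (1.45 : ℝ) ^ (m + 2) := by nlinarith
        _ < (1.45 : ℝ) ^ 3 * (1.45 : ℝ) ^ (m + 2) := by nlinarith
        _ = (1.45 : ℝ) ^ (m + 4 + 1) := by rw [← pow_add]; ring_nf

theorem tree_term_count_bound (M : ℕ → ℕ) (h0 : M 0 = 1)
    (hrec : ∀ k, 1 ≤ k →
      M k = (Finset.range k).sup (fun j => max (M j * M (k - 1 - j)) (M j + M (k - 1 - j)))) :
    ∀ k, (M k : ℝ) < (1.45 : ℝ) ^ (k + 1) := by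
  have hMf : ∀ k, M k ≤ f k := by
    intro k
    induction k using Nat.strong_induction_on with
    | _ k ih =>
      rcases Nat.eq_zero_or_pos k with hk | hk
      · subst hk; rw [h0]; exact f_one_le 0
      · rw [hrec k hk]
        apply Finset.sup_le
        intro j hj
        simp only [Finset.mem_range] at hj
        have h1 : M j ≤ f j := ih j (by omega)
        have h2 : M (k-1-j) ≤ f (k-1-j) := ih _ (by omega)
        have hk' : j + (k-1-j) + 1 = k := by omega
        apply max_le
        · calc M j * M (k-1-j) ≤ f j * f (k-1-j) := Nat.mul_le_mul h1 h2
            _ ≤ f (j + (k-1-j) + 1) := f_prod _ _ _ rfl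
            _ = f k := by rw [hk']
        · calc M j + M (k-1-j) ≤ f j + f (k-1-j) := Nat.add_le_add h1 h2
            _ ≤ f (j + (k-1-j) + 1) := f_sum _ _
            _ = f k := by rw [hk']
  intro k
  calc (M k : ℝ) ≤ (f k : ℝ) := by exact_mod_cast hMf k
    _ < (1.45 : ℝ) ^ (k + 1) := f_real_bound k
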